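/- Assume ᾱ ∉ A_0 and m = d. Almost surely the following holds: if (α̊, β̊) ∈ ℝ^d × (ℝ^d)^d satisfies ∇_α V_n(α̊, β̊) = 0 and ∇_β V_n(α̊, β̊) = 0, the d vectors (|β̂̊_ℓ(ω)|²)_{ω ∈ Ω_d}, ℓ = 0,…,d−1, form a basis of ℝ^d, and β̊_ℓ ∉ A_0 for every ℓ < d, then α̊ ∈ A_n and (α̊, β̊) is a Nash equilibrium of V_n, i.e. V_n(α̊, β) ≤ V_n(α̊, β̊) ≤ V_n(α, β̊) for all α ∈ ℝ^d and β ∈ (ℝ^d)^d. -/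

import Mathlib

open MeasureTheory ProbabilityTheory Filter
open scoped Real

noncomputable section

/-- Discrete Fourier transform of `x : ℝ^d` at frequency `ω = 2πk/d`. -/
def dft (d : ℕ) (x : Fin d → ℝ) (k : Fin d) : ℂ :=
  ∑ u : Fin d, (x u : ℂ) *
    Complex.exp (-(2 * Real.pi * Complex.I * ((k : ℕ) : ℂ) * ((u : ℕ) : ℂ)) / (d : ℂ))

/-- Circular convolution on `ℝ^d` (indices mod `d`). -/
def cconv (d : ℕ) (a z : Fin d → ℝ) : Fin d → ℝ := fun u => ∑ v : Fin d, a v * z (u - v)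

/-- Covariance matrix of `a ⋆ Z`, `Z ~ N(0, I_d)` white noise. -/
def covMat (d : ℕ) (a : Fin d → ℝ) : Matrix (Fin d) (Fin d) ℝ :=
  Matrix.of fun u u' => ∑ v : Fin d, a (u - v) * a (u' - v)

/-- Spectral (operator) norm of a matrix. -/
def specNorm (d : ℕ) (M : Matrix (Fin d) (Fin d) ℝ) : ℝ :=
  ‖Matrix.toEuclideanCLM (𝕜 := ℝ) M‖

/-- Euclidean norm. -/
def l2norm (d : ℕ) (x : Fin d → ℝ) : ℝ := Real.sqrt (∑ u : Fin d, x u ^ 2)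

/-- Empirical covariance matrix of the first `n` samples. -/
def empCov (d n : ℕ) (y : ℕ → Fin d → ℝ) : Matrix (Fin d) (Fin d) ℝ :=
  (n : ℝ)⁻¹ • ∑ i ∈ Finset.range n, Matrix.vecMulVec (y i) (y i)

/-- Empirical mean of `|ŷ(ω)|²` over the first `n` samples. -/
def empPS (d n : ℕ) (y : ℕ → Fin d → ℝ) (k : Fin d) : ℝ :=
  (n : ℝ)⁻¹ * ∑ i ∈ Finset.range n, Complex.normSq (dft d (y i) k)

/-- The consistent-generator set `A_n` (for a fixed sample `(z̄_i, z_i)_{i<n}`). -/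
def An (d n : ℕ) (abar : Fin d → ℝ) (zbar z : ℕ → Fin d → ℝ) : Set (Fin d → ℝ) :=
  {a | ∀ k : Fin d, Complex.normSq (dft d a k) =
      empPS d n (fun i => cconv d abar (zbar i)) k / empPS d n z k}


/-- The combined family of all Gaussian coordinates of the two sample sequences
`z̄` (at `false`) and `z` (at `true`). -/
def coords {Ω : Type*} (d : ℕ) (zbar z : ℕ → Ω → Fin d → ℝ) :
    Bool × ℕ × Fin d → Ω → ℝ :=
  fun p ω => if p.1 then z p.2.1 ω p.2.2 else zbar p.2.1 ω p.2.2

/-- `(z̄_i)` and `(z_i)` are mutually independent i.i.d. `N(0, I_d)` random vectors: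
all the real coordinates are independent standard Gaussians. -/
def IsWhiteNoisePair {Ω : Type*} [MeasureSpace Ω] (d : ℕ)
    (zbar z : ℕ → Ω → Fin d → ℝ) : Prop :=
  (∀ i, Measurable (zbar i)) ∧ (∀ i, Measurable (z i)) ∧
    iIndepFun (coords d zbar z) ℙ ∧
    ∀ p : Bool × ℕ × Fin d, Measure.map (coords d zbar z p) ℙ = gaussianReal 0 1

/-- `r_{n,ℓ}(α, β) = E_n(‖X ⋆ β_ℓ‖²) − E_n(‖(α ⋆ Z) ⋆ β_ℓ‖²)` for the convolutional
discriminator, given samples `x_i = xs i`, `z_i = zs i`. -/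
def rConv (d n : ℕ) (xs zs : ℕ → Fin d → ℝ) (a : Fin d → ℝ) (bl : Fin d → ℝ) : ℝ :=
  (n : ℝ)⁻¹ * ∑ i ∈ Finset.range n, ∑ u : Fin d, cconv d (xs i) bl u ^ 2
    - (n : ℝ)⁻¹ * ∑ i ∈ Finset.range n, ∑ u : Fin d, cconv d (cconv d a (zs i)) bl u ^ 2

/-- The convolutional-discriminator objective `V_n(α, β) = ∑_{ℓ<m} r_{n,ℓ}(α, β)²`. -/
def VConv (d n m : ℕ) (xs zs : ℕ → Fin d → ℝ) (a : Fin d → ℝ)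
    (b : Fin m → Fin d → ℝ) : ℝ :=
  ∑ ℓ : Fin m, rConv d n xs zs a (b ℓ) ^ 2

/-!
By the convolution theorem and Parseval's identity,
`d · r_{n,ℓ}(α, β) = ∑_ω |β̂_ℓ(ω)|² c(ω)` with `c(ω) = E_n|X̂(ω)|² − |α̂(ω)|² E_n|Ẑ(ω)|²`
independent of `β`. As `r_{n,ℓ}(α, ·)` is a quadratic form, Euler's identity turns
`∇_{β_ℓ} V_n = 0` into `4 r_{n,ℓ}² = 0`, and since the `|β̂_ℓ|²` span `ℝ^d` this forces `c = 0`.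
Hence `V_n(α̊, ·) ≡ 0 ≤ V_n`, and `α̊ ∈ A_n` once every `E_n|Ẑ(ω)|²` is positive. That holds
almost surely: `Re Ẑ_0(ω)` is the Gaussian `z_0(0)` plus a variable independent of it, so it has
no atom at `0`.
-/

def dftRoot (d : ℕ) : ℂ := Complex.exp (-(2 * π * Complex.I) / d)

lemma isPrimitiveRoot_dftRoot (d : ℕ) [NeZero d] : IsPrimitiveRoot (dftRoot d) d := by
  rw [dftRoot, neg_div, Complex.exp_neg]
  exact (Complex.isPrimitiveRoot_exp d (NeZero.ne d)).inv

lemma conj_dftRoot (d : ℕ) : (starRingEnd ℂ) (dftRoot d) = (dftRoot d)⁻¹ := by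
  rw [dftRoot, ← Complex.exp_conj, ← Complex.exp_neg]
  congr 1
  simp [map_div₀, map_ofNat, Complex.conj_ofReal, Complex.conj_I]
  ring

lemma dft_eq_sum_pow (d : ℕ) (x : Fin d → ℝ) (k : Fin d) :
    dft d x k = ∑ u, (x u : ℂ) * (dftRoot d ^ (k : ℕ)) ^ (u : ℕ) := by
  refine Finset.sum_congr rfl fun u _ => ?_
  rw [dftRoot, ← pow_mul, ← Complex.exp_nat_mul]
  congr 2
  push_cast
  ring

lemma pow_val_add_of_pow_eq_one {M : Type*} [Monoid M] {d : ℕ} {ω : M} (hω : ω ^ d = 1)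
    (u v : Fin d) : ω ^ (u + v : Fin d).val = ω ^ u.val * ω ^ v.val := by
  rw [Fin.val_add, ← pow_eq_pow_mod _ hω, pow_add]

lemma dft_cconv (d : ℕ) (a z : Fin d → ℝ) (k : Fin d) :
    dft d (cconv d a z) k = dft d a k * dft d z k := by
  have hd : NeZero d := ⟨k.pos.ne'⟩
  set ω := dftRoot d ^ (k : ℕ)
  have hω : ω ^ d = 1 := by
    rw [← pow_mul, mul_comm, pow_mul, (isPrimitiveRoot_dftRoot d).pow_eq_one, one_pow]
  have hshift : ∀ v, ∑ u, (z (u - v) : ℂ) * ω ^ (u : ℕ) = ω ^ (v : ℕ) * dft d z k := by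
    intro v
    rw [dft_eq_sum_pow, Finset.mul_sum, ← Equiv.sum_comp (Equiv.addRight v)]
    refine Finset.sum_congr rfl fun t _ => ?_
    simp only [Equiv.coe_addRight, add_sub_cancel_right, pow_val_add_of_pow_eq_one hω]
    ring
  calc dft d (cconv d a z) k
      = ∑ v, (a v : ℂ) * ∑ u, (z (u - v) : ℂ) * ω ^ (u : ℕ) := by
        simp only [dft_eq_sum_pow, cconv, Complex.ofReal_sum, Complex.ofReal_mul,
          Finset.sum_mul, Finset.mul_sum]
        rw [Finset.sum_comm]
        simp only [mul_assoc, ω]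
    _ = dft d a k * dft d z k := by
        simp only [hshift, dft_eq_sum_pow d a, Finset.sum_mul]
        exact Finset.sum_congr rfl fun v _ => by ring

lemma sum_dftRoot_pow_mul_conj (d : ℕ) (u v : Fin d) :
    ∑ k : Fin d, (dftRoot d ^ (k : ℕ)) ^ (u : ℕ) * (starRingEnd ℂ) ((dftRoot d ^ (k : ℕ)) ^ (v : ℕ))
      = if u = v then (d : ℂ) else 0 := by
  have hd : NeZero d := ⟨u.pos.ne'⟩
  have hζ := isPrimitiveRoot_dftRoot d
  have hζ0 : dftRoot d ≠ 0 := hζ.ne_zero (NeZero.ne d)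
  set ρ := dftRoot d ^ (u : ℕ) / dftRoot d ^ (v : ℕ) with hρ
  have hterm : ∀ k : Fin d, (dftRoot d ^ (k : ℕ)) ^ (u : ℕ) *
      (starRingEnd ℂ) ((dftRoot d ^ (k : ℕ)) ^ (v : ℕ)) = ρ ^ (k : ℕ) := by
    intro k
    rw [map_pow, map_pow, conj_dftRoot, hρ]
    ring
  rw [Finset.sum_congr rfl fun k _ => hterm k, Fin.sum_univ_eq_sum_range (ρ ^ ·)]
  split_ifs with huv
  · simp [ρ, huv, hζ0]
  · have hρ1 : ρ ≠ 1 := by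
      rw [Ne, div_eq_one_iff_eq (pow_ne_zero _ hζ0)]
      exact fun h => huv (Fin.ext (hζ.pow_inj u.isLt v.isLt h))
    have hρd : ρ ^ d = 1 := by
      rw [div_pow, ← pow_mul, ← pow_mul, mul_comm, pow_mul, hζ.pow_eq_one, mul_comm, pow_mul,
        hζ.pow_eq_one]
      simp
    rw [geom_sum_eq hρ1, hρd, sub_self, zero_div]

lemma sum_normSq_dft (d : ℕ) (x : Fin d → ℝ) :
    ∑ k, Complex.normSq (dft d x k) = d * ∑ u, x u ^ 2 := by
  apply Complex.ofReal_injective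
  push_cast
  calc ∑ k, (Complex.normSq (dft d x k) : ℂ)
      = ∑ u, ∑ v, (x u : ℂ) * x v * ∑ k : Fin d, (dftRoot d ^ (k : ℕ)) ^ (u : ℕ) *
          (starRingEnd ℂ) ((dftRoot d ^ (k : ℕ)) ^ (v : ℕ)) := by
        have hexpand : ∀ k, (Complex.normSq (dft d x k) : ℂ) =
            ∑ u, ∑ v, (x u : ℂ) * x v * ((dftRoot d ^ (k : ℕ)) ^ (u : ℕ) *
              (starRingEnd ℂ) ((dftRoot d ^ (k : ℕ)) ^ (v : ℕ))) := by
          intro k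
          rw [← Complex.mul_conj, dft_eq_sum_pow, map_sum, Finset.sum_mul_sum]
          refine Finset.sum_congr rfl fun u _ => Finset.sum_congr rfl fun v _ => ?_
          rw [map_mul, Complex.conj_ofReal]
          ring
        rw [Finset.sum_congr rfl fun k _ => hexpand k, Finset.sum_comm]
        refine Finset.sum_congr rfl fun u _ => ?_
        rw [Finset.sum_comm]
        exact Finset.sum_congr rfl fun v _ => by rw [Finset.mul_sum]
    _ = d * ∑ u, (x u : ℂ) ^ 2 := by
        simp only [sum_dftRoot_pow_mul_conj, mul_ite, mul_zero, Finset.sum_ite_eq,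
          Finset.mem_univ, if_true, Finset.mul_sum]
        exact Finset.sum_congr rfl fun u _ => by ring

lemma mul_sum_sq_cconv (d : ℕ) (x b : Fin d → ℝ) :
    d * ∑ u, cconv d x b u ^ 2 =
      ∑ k, Complex.normSq (dft d x k) * Complex.normSq (dft d b k) := by
  simp only [← sum_normSq_dft, dft_cconv, Complex.normSq_mul]

def spectralDefect (d n : ℕ) (xs zs : ℕ → Fin d → ℝ) (a : Fin d → ℝ) (k : Fin d) : ℝ :=
  empPS d n xs k - Complex.normSq (dft d a k) * empPS d n zs k

lemma mul_rConv_eq (d n : ℕ) (xs zs : ℕ → Fin d → ℝ) (a bl : Fin d → ℝ) :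
    d * rConv d n xs zs a bl =
      ∑ k, Complex.normSq (dft d bl k) * spectralDefect d n xs zs a k := by
  have hx : ∀ i, d * ∑ u, cconv d (xs i) bl u ^ 2 =
      ∑ k, Complex.normSq (dft d bl k) * Complex.normSq (dft d (xs i) k) := fun i => by
    rw [mul_sum_sq_cconv]; simp only [mul_comm]
  have hz : ∀ i, d * ∑ u, cconv d (cconv d a (zs i)) bl u ^ 2 =
      ∑ k, Complex.normSq (dft d bl k) *
        (Complex.normSq (dft d a k) * Complex.normSq (dft d (zs i) k)) := fun i => by
    rw [mul_sum_sq_cconv]; simp only [dft_cconv, Complex.normSq_mul, mul_comm]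
  calc d * rConv d n xs zs a bl
      = (n : ℝ)⁻¹ * ∑ i ∈ Finset.range n, d * ∑ u, cconv d (xs i) bl u ^ 2
        - (n : ℝ)⁻¹ * ∑ i ∈ Finset.range n, d * ∑ u, cconv d (cconv d a (zs i)) bl u ^ 2 := by
        rw [rConv, ← Finset.mul_sum, ← Finset.mul_sum]; ring
    _ = _ := by
        simp only [hx, hz, spectralDefect, empPS, mul_sub, Finset.mul_sum, Finset.sum_sub_distrib]
        rw [Finset.sum_comm, Finset.sum_comm (s := Finset.range n)]
        congr 1 <;> exact Finset.sum_congr rfl fun k _ => Finset.sum_congr rfl fun i _ => by ring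

lemma cconv_smul_right (d : ℕ) (x b : Fin d → ℝ) (s : ℝ) :
    cconv d x (s • b) = s • cconv d x b := by
  ext u
  simp only [cconv, Pi.smul_apply, smul_eq_mul, Finset.mul_sum]
  exact Finset.sum_congr rfl fun v _ => by ring

lemma rConv_smul (d n : ℕ) (xs zs : ℕ → Fin d → ℝ) (a bl : Fin d → ℝ) (s : ℝ) :
    rConv d n xs zs a (s • bl) = s ^ 2 * rConv d n xs zs a bl := by
  simp only [rConv, cconv_smul_right, Pi.smul_apply, smul_eq_mul, mul_pow, ← Finset.mul_sum]
  ring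

lemma differentiable_rConv (d n : ℕ) (xs zs : ℕ → Fin d → ℝ) (a : Fin d → ℝ) :
    Differentiable ℝ (rConv d n xs zs a) := by
  unfold rConv cconv
  fun_prop

lemma VConv_update (d n m : ℕ) (xs zs : ℕ → Fin d → ℝ) (a : Fin d → ℝ)
    (b : Fin m → Fin d → ℝ) (ℓ : Fin m) (w : Fin d → ℝ) :
    VConv d n m xs zs a (Function.update b ℓ w) =
      rConv d n xs zs a w ^ 2 + ∑ ℓ' ∈ Finset.univ \ {ℓ}, rConv d n xs zs a (b ℓ') ^ 2 := by
  rw [VConv, ← Finset.sum_update_of_mem (Finset.mem_univ ℓ)]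
  congr 1
  ext ℓ'
  rw [Function.apply_update (fun _ w => rConv d n xs zs a w ^ 2)]

lemma eq_zero_of_forall_dotProduct_eq_zero {ι κ : Type*} [Fintype κ] {g : ι → κ → ℝ}
    (hspan : Submodule.span ℝ (Set.range g) = ⊤) {c : κ → ℝ} (h : ∀ ℓ, g ℓ ⬝ᵥ c = 0) :
    c = 0 := by
  have hall : ∀ x ∈ Submodule.span ℝ (Set.range g), x ⬝ᵥ c = 0 := by
    intro x hx
    induction hx using Submodule.span_induction with
    | mem x hx => obtain ⟨ℓ, rfl⟩ := hx; exact h ℓ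
    | zero => exact zero_dotProduct c
    | add x y _ _ hx hy => rw [add_dotProduct, hx, hy, add_zero]
    | smul s x _ hx => rw [smul_dotProduct, hx, smul_zero]
  exact dotProduct_self_eq_zero.1 (hall c (hspan ▸ Submodule.mem_top))

lemma fderiv_apply_self_of_homogeneous {E : Type*} [NormedAddCommGroup E] [NormedSpace ℝ E]
    {q : E → ℝ} {w : E} (hq : DifferentiableAt ℝ q w)
    (hhom : ∀ s : ℝ, q (s • w) = s ^ 2 * q w) : fderiv ℝ q w w = 2 * q w := by
  have hray : HasDerivAt (fun s : ℝ => q (s • w)) (fderiv ℝ q w w) 1 := by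
    have := (hasDerivAt_id (1 : ℝ)).smul_const w
    rw [one_smul] at this
    exact hq.hasFDerivAt.comp_hasDerivAt_of_eq 1 this (one_smul ℝ w).symm
  simp only [hhom] at hray
  exact hray.unique (by simpa using (hasDerivAt_pow 2 (1 : ℝ)).mul_const (q w))

lemma eq_zero_of_hasDerivAt_update_sq {ι : Type*} [Fintype ι] [DecidableEq ι]
    {q : (ι → ℝ) → ℝ} {w : ι → ℝ} (hq : DifferentiableAt ℝ q w)
    (hhom : ∀ s : ℝ, q (s • w) = s ^ 2 * q w)
    (hcrit : ∀ v, HasDerivAt (fun t => q (Function.update w v t) ^ 2) 0 (w v)) : q w = 0 := by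
  have hpartial : ∀ v, q w * fderiv ℝ q w (Pi.single v 1) = 0 := by
    intro v
    have hline := hq.hasFDerivAt.comp_hasDerivAt_of_eq (w v) (hasDerivAt_update w v (w v))
      (Function.update_eq_self v w).symm
    have := (hline.pow 2).unique (hcrit v)
    norm_num at this
    exact mul_eq_zero.2 this
  have heuler := fderiv_apply_self_of_homogeneous hq hhom
  have : q w * fderiv ℝ q w w = 0 := by
    rw [congrArg (fderiv ℝ q w) (pi_eq_sum_univ' w), map_sum, Finset.mul_sum]
    refine Finset.sum_eq_zero fun v _ => ?_
    rw [map_smul, smul_eq_mul, mul_left_comm, hpartial v, mul_zero]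
  rw [heuler] at this
  nlinarith [sq_nonneg (q w)]

lemma rConv_eq_zero_of_hasDerivAt_update {d n m : ℕ} {xs zs : ℕ → Fin d → ℝ} {a : Fin d → ℝ}
    {b : Fin m → Fin d → ℝ}
    (hcrit : ∀ ℓ v, HasDerivAt (fun t : ℝ =>
      VConv d n m xs zs a (Function.update b ℓ (Function.update (b ℓ) v t))) 0 (b ℓ v))
    (ℓ : Fin m) : rConv d n xs zs a (b ℓ) = 0 := by
  refine eq_zero_of_hasDerivAt_update_sq (differentiable_rConv d n xs zs a _)
    (fun s => rConv_smul d n xs zs a _ s) fun v => ?_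
  have := hcrit ℓ v
  simp only [VConv_update] at this
  exact (hasDerivAt_add_const_iff _).1 this

lemma spectralDefect_eq_zero_of_span {d n m : ℕ} {xs zs : ℕ → Fin d → ℝ} {a : Fin d → ℝ}
    {b : Fin m → Fin d → ℝ}
    (hspan : Submodule.span ℝ
      (Set.range fun ℓ k => Complex.normSq (dft d (b ℓ) k)) = ⊤)
    (hr : ∀ ℓ, rConv d n xs zs a (b ℓ) = 0) : spectralDefect d n xs zs a = 0 :=
  eq_zero_of_forall_dotProduct_eq_zero hspan fun ℓ => by
    rw [dotProduct, ← mul_rConv_eq, hr ℓ, mul_zero]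

lemma VConv_eq_zero_of_spectralDefect_eq_zero {d n m : ℕ} [NeZero d] {xs zs : ℕ → Fin d → ℝ}
    {a : Fin d → ℝ} (ha : spectralDefect d n xs zs a = 0) (b : Fin m → Fin d → ℝ) :
    VConv d n m xs zs a b = 0 := by
  have hr : ∀ bl, rConv d n xs zs a bl = 0 := fun bl => by
    have := mul_rConv_eq d n xs zs a bl
    simp only [ha, Pi.zero_apply, mul_zero, Finset.sum_const_zero, mul_eq_zero,
      Nat.cast_eq_zero, NeZero.ne d, false_or] at this
    exact this
  simp [VConv, hr]

lemma measure_add_eq_zero_of_indepFun {Ω : Type*} [MeasurableSpace Ω] {μ : Measure Ω}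
    [IsFiniteMeasure μ] {X Y : Ω → ℝ} (hX : Measurable X) (hY : Measurable Y)
    (hXY : IndepFun X Y μ) [NullSingletonClass (μ.map X)] :
    μ {ω | X ω + Y ω = 0} = 0 := by
  have hS : MeasurableSet {p : ℝ × ℝ | p.2 + p.1 = 0} :=
    measurableSet_eq_fun (by fun_prop) measurable_const
  have hslice : ∀ y : ℝ, Prod.mk y ⁻¹' {p : ℝ × ℝ | p.2 + p.1 = 0} = {-y} := fun y => by
    ext x; simp [eq_neg_iff_add_eq_zero]
  have hmap : μ.map (fun ω => (Y ω, X ω)) = (μ.map Y).prod (μ.map X) :=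
    (indepFun_iff_map_prod_eq_prod_map_map hY.aemeasurable hX.aemeasurable).1 hXY.symm
  calc μ {ω | X ω + Y ω = 0}
      = μ.map (fun ω => (Y ω, X ω)) {p : ℝ × ℝ | p.2 + p.1 = 0} := by
        rw [Measure.map_apply (hY.prodMk hX) hS]; rfl
    _ = 0 := by simp [hmap, Measure.prod_apply hS, hslice]

lemma ae_dft_ne_zero {Ω : Type*} [MeasureSpace Ω] [IsProbabilityMeasure (ℙ : Measure Ω)]
    {d : ℕ} [NeZero d] {zbar z : ℕ → Ω → Fin d → ℝ} (hwn : IsWhiteNoisePair d zbar z)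
    (i : ℕ) (k : Fin d) : ∀ᵐ ω ∂ℙ, dft d (z i ω) k ≠ 0 := by
  obtain ⟨hmeas_bar, hmeas, hindep, hlaw⟩ := hwn
  have hcoords : ∀ p, Measurable (coords d zbar z p) := by
    rintro ⟨_ | _, j, u⟩
    · exact (measurable_pi_apply u).comp (hmeas_bar j)
    · exact (measurable_pi_apply u).comp (hmeas j)
  set c : Fin d → ℝ := fun u => ((dftRoot d ^ (k : ℕ)) ^ (u : ℕ)).re
  set g : Bool × ℕ × Fin d → Ω → ℝ := fun p ω => coords d zbar z p ω * c p.2.2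
  have hg : ∀ p, Measurable (g p) := fun p => (hcoords p).mul_const _
  set S := (Finset.univ.erase 0).image fun u : Fin d => (true, i, u)
  have h0S : (true, i, (0 : Fin d)) ∉ S := by simp [S]
  have hre : ∀ ω, (dft d (z i ω) k).re = g (true, i, 0) ω + (∑ p ∈ S, g p) ω := by
    intro ω
    rw [dft_eq_sum_pow, Complex.re_sum, ← Finset.add_sum_erase _ _ (Finset.mem_univ 0),
      Finset.sum_apply, Finset.sum_image (by simp)]
    simp [g, c, coords]
  have : NullSingletonClass (Measure.map (g (true, i, 0)) ℙ) := by
    have hg0 : g (true, i, 0) = coords d zbar z (true, i, 0) := by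
      ext ω; simp [g, c]
    rw [hg0, hlaw]
    exact nullSingletonClass_gaussianReal one_ne_zero
  have hgind : iIndepFun g ℙ := hindep.comp _ fun p => measurable_id.mul_const (c p.2.2)
  have hY : Measurable (∑ p ∈ S, g p) := by
    rw [Finset.sum_fn]; exact Finset.measurable_sum S fun p _ => hg p
  have hnull := measure_add_eq_zero_of_indepFun (hg _) hY
    (hgind.indepFun_finsetSum_of_notMem hg h0S).symm
  filter_upwards [measure_eq_zero_iff_ae_notMem.1 hnull] with ω hω hdft
  exact hω (by rw [← hre, hdft, Complex.zero_re])

lemma ae_empPS_pos {Ω : Type*} [MeasureSpace Ω] [IsProbabilityMeasure (ℙ : Measure Ω)]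
    {d n : ℕ} [NeZero d] (hn : 1 ≤ n) {zbar z : ℕ → Ω → Fin d → ℝ}
    (hwn : IsWhiteNoisePair d zbar z) :
    ∀ᵐ ω ∂ℙ, ∀ k, 0 < empPS d n (fun i => z i ω) k := by
  rw [ae_all_iff]
  intro k
  filter_upwards [ae_dft_ne_zero hwn 0 k] with ω hω
  have hsum : 0 < ∑ i ∈ Finset.range n, Complex.normSq (dft d (z i ω) k) :=
    Finset.sum_pos' (fun i _ => Complex.normSq_nonneg _)
      ⟨0, Finset.mem_range.2 hn, Complex.normSq_pos.2 hω⟩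
  exact mul_pos (inv_pos.2 (by exact_mod_cast hn)) hsum

theorem stmt15_general {d n : ℕ} (hd : 1 ≤ d) (hn : 1 ≤ n)
    {Ω : Type*} [MeasureSpace Ω] [IsProbabilityMeasure (ℙ : Measure Ω)]
    (abar : Fin d → ℝ)
    (zbar z : ℕ → Ω → Fin d → ℝ) (hwn : IsWhiteNoisePair d zbar z) :
    ∀ᵐ ω ∂ℙ, ∀ (a₀ : Fin d → ℝ) (b₀ : Fin d → Fin d → ℝ),
      -- `∇_α V_n(α̊, β̊) = 0`
      (∀ u : Fin d,
        HasDerivAt (fun t : ℝ =>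
          VConv d n d (fun i => cconv d abar (zbar i ω)) (fun i => z i ω)
            (Function.update a₀ u t) b₀) 0 (a₀ u)) →
      -- `∇_β V_n(α̊, β̊) = 0`
      (∀ ℓ v : Fin d,
        HasDerivAt (fun t : ℝ =>
          VConv d n d (fun i => cconv d abar (zbar i ω)) (fun i => z i ω) a₀
            (Function.update b₀ ℓ (Function.update (b₀ ℓ) v t))) 0 (b₀ ℓ v)) →
      -- `(|β̂̊_ℓ(ω)|²)_{ℓ<d}` form a basis of `ℝ^d`
      (LinearIndependent ℝ
          (fun ℓ : Fin d => fun k : Fin d => Complex.normSq (dft d (b₀ ℓ) k)) ∧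
        Submodule.span ℝ
          (Set.range fun ℓ : Fin d => fun k : Fin d => Complex.normSq (dft d (b₀ ℓ) k))
            = ⊤) →
      -- `β̊_ℓ ∉ A_0` for every `ℓ`
      (∀ ℓ k : Fin d, dft d (b₀ ℓ) k ≠ 0) →
      a₀ ∈ An d n abar (fun i => zbar i ω) (fun i => z i ω) ∧
        (∀ b : Fin d → Fin d → ℝ,
          VConv d n d (fun i => cconv d abar (zbar i ω)) (fun i => z i ω) a₀ b ≤
            VConv d n d (fun i => cconv d abar (zbar i ω)) (fun i => z i ω) a₀ b₀) ∧
        (∀ a : Fin d → ℝ,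
          VConv d n d (fun i => cconv d abar (zbar i ω)) (fun i => z i ω) a₀ b₀ ≤
            VConv d n d (fun i => cconv d abar (zbar i ω)) (fun i => z i ω) a b₀) := by
  have : NeZero d := ⟨by omega⟩
  filter_upwards [ae_empPS_pos hn hwn] with ω hPZ
  intro a₀ b₀ _ hcrit hbasis _
  have hdefect := spectralDefect_eq_zero_of_span hbasis.2 (rConv_eq_zero_of_hasDerivAt_update hcrit)
  have hV := VConv_eq_zero_of_spectralDefect_eq_zero (m := d) hdefect
  refine ⟨fun k => ?_, fun b => by rw [hV, hV], fun a => hV b₀ ▸ ?_⟩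
  · rw [eq_div_iff (hPZ k).ne', eq_comm, ← sub_eq_zero]
    exact congrFun hdefect k
  · exact Finset.sum_nonneg fun ℓ _ => sq_nonneg _

theorem stmt15 {d n : ℕ} (hd : 1 ≤ d) (hn : 1 ≤ n)
    {Ω : Type*} [MeasureSpace Ω] [IsProbabilityMeasure (ℙ : Measure Ω)]
    (abar : Fin d → ℝ) (habar : ∀ k : Fin d, dft d abar k ≠ 0)
    (zbar z : ℕ → Ω → Fin d → ℝ) (hwn : IsWhiteNoisePair d zbar z) :
    ∀ᵐ ω ∂ℙ, ∀ (a₀ : Fin d → ℝ) (b₀ : Fin d → Fin d → ℝ),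
      -- `∇_α V_n(α̊, β̊) = 0`
      (∀ u : Fin d,
        HasDerivAt (fun t : ℝ =>
          VConv d n d (fun i => cconv d abar (zbar i ω)) (fun i => z i ω)
            (Function.update a₀ u t) b₀) 0 (a₀ u)) →
      -- `∇_β V_n(α̊, β̊) = 0`
      (∀ ℓ v : Fin d,
        HasDerivAt (fun t : ℝ =>
          VConv d n d (fun i => cconv d abar (zbar i ω)) (fun i => z i ω) a₀
            (Function.update b₀ ℓ (Function.update (b₀ ℓ) v t))) 0 (b₀ ℓ v)) →
      -- `(|β̂̊_ℓ(ω)|²)_{ℓ<d}` form a basis of `ℝ^d`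
      (LinearIndependent ℝ
          (fun ℓ : Fin d => fun k : Fin d => Complex.normSq (dft d (b₀ ℓ) k)) ∧
        Submodule.span ℝ
          (Set.range fun ℓ : Fin d => fun k : Fin d => Complex.normSq (dft d (b₀ ℓ) k))
            = ⊤) →
      -- `β̊_ℓ ∉ A_0` for every `ℓ`
      (∀ ℓ k : Fin d, dft d (b₀ ℓ) k ≠ 0) →
      a₀ ∈ An d n abar (fun i => zbar i ω) (fun i => z i ω) ∧
        (∀ b : Fin d → Fin d → ℝ,
          VConv d n d (fun i => cconv d abar (zbar i ω)) (fun i => z i ω) a₀ b ≤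
            VConv d n d (fun i => cconv d abar (zbar i ω)) (fun i => z i ω) a₀ b₀) ∧
        (∀ a : Fin d → ℝ,
          VConv d n d (fun i => cconv d abar (zbar i ω)) (fun i => z i ω) a₀ b₀ ≤
            VConv d n d (fun i => cconv d abar (zbar i ω)) (fun i => z i ω) a b₀) :=
  stmt15_general hd hn abar zbar z hwn
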